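/- For every integer n ≥ 4, the Waldschmidt constant of I_{B_n} equals n/(n−2); that is, the sequence α_{n,m}/m converges, as m → ∞, to n/(n−2). -/

import Mathlib

open MvPolynomial
open Fin.NatCast

/-- The subtree (arc) of `n-2` consecutive cycle vertices of the `n`-cycle `Q_n`
(on vertices `1,…,n` inside `Fin (n+2)`), starting at vertex `i+1`, for `i = 0,…,n-1`.
The family `arcT n i`, `i < n`, is exactly the family `𝒯` of subtrees of `Q_n`
with `n-2` vertices. -/
def arcT (n i : ℕ) : Finset (Fin (n + 2)) :=
  (Finset.range (n - 2)).image fun t => (((i + t) % n + 1 : ℕ) : Fin (n + 2))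

/-- The monomial prime ideal `⟨x_v⟩ + ⟨x_j : j ∈ S⟩`. -/
noncomputable def apexIdeal (K : Type*) [Field K] (n : ℕ) (v : Fin (n + 2))
    (S : Finset (Fin (n + 2))) : Ideal (MvPolynomial (Fin (n + 2)) K) :=
  Ideal.span (insert (X v) (X '' (S : Set (Fin (n+2))) : Set (MvPolynomial (Fin (n + 2)) K)))

/-- The `m`-th symbolic power `I_{B_n}^{(m)} = ⋂_{S ∈ 𝒯} (I_{[0,S]}^m ∩ I_{[n+1,S]}^m)`. -/
noncomputable def symbPow (K : Type*) [Field K] (n m : ℕ) : Ideal (MvPolynomial (Fin (n + 2)) K) :=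
  ⨅ i ∈ Finset.range n,
    apexIdeal K n 0 (arcT n i) ^ m ⊓ apexIdeal K n ((n + 1 : ℕ) : Fin (n + 2)) (arcT n i) ^ m

/-- The monomial `x_0^{a_0} x_1^{a_1} ⋯ x_{n+1}^{a_{n+1}}`. -/
noncomputable def monom (K : Type*) [Field K] (n : ℕ) (a : Fin (n + 2) → ℕ) :
    MvPolynomial (Fin (n + 2)) K :=
  ∏ i, X i ^ a i

/-- `α_{n,m}`: the least total degree of a monomial lying in `I_{B_n}^{(m)}`. -/
noncomputable def alphaSymb (K : Type*) [Field K] (n m : ℕ) : ℕ :=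
  sInf {d | ∃ a : Fin (n + 2) → ℕ, (∑ i, a i) = d ∧ monom K n a ∈ symbPow K n m}

/-- The Stanley–Reisner ideal `I_{B_n}` of the bipyramid `B_n`, presented by its
quadratic generators: `x_0 x_{n+1}` together with `x_i x_j` for non-adjacent
vertices `i, j` of the cycle `Q_n`. -/
noncomputable def bipyrIdeal (K : Type*) [Field K] (n : ℕ) : Ideal (MvPolynomial (Fin (n + 2)) K) :=
  Ideal.span ({X (0 : Fin (n + 2)) * X ((n + 1 : ℕ) : Fin (n + 2))} ∪
    {p | ∃ i j : ℕ, 1 ≤ i ∧ i ≤ n ∧ 1 ≤ j ∧ j ≤ n ∧ i ≠ j ∧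
      j ≠ i % n + 1 ∧ i ≠ j % n + 1 ∧
      p = X ((i : ℕ) : Fin (n + 2)) * X ((j : ℕ) : Fin (n + 2))})

/-!
A monomial `x^a` lies in `⟨x_j : j ∈ T⟩^m` exactly when `∑_{j ∈ T} a_j ≥ m`, so
`α_{n,m}` is the optimum of an integer linear program: minimise `∑ a_j` subject to
`a_v + ∑_{j ∈ S} a_j ≥ m` for both apexes `v` and all arcs `S`. Weight `⌊m/(n-2)⌋ + 1` on every
cycle vertex is feasible, so `α_{n,m} ≤ n (m/(n-2) + 1)`. Conversely, summing the constraints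
of one apex over all `n` arcs counts every cycle vertex `n - 2` times, giving
`n m ≤ n a_v + (n-2) σ` with `σ` the cycle weight; adding the two apexes and using
`n ≤ 2(n-2)` yields `n m ≤ (n-2) α_{n,m}`.
-/

open Finset Filter Topology

theorem prod_X_pow_mem_span_X_image_pow_iff {R σ : Type*} [CommSemiring R] [Nontrivial R]
    [Fintype σ] [DecidableEq σ] (T : Finset σ) (a : σ → ℕ) (m : ℕ) :
    (∏ i, (X i : MvPolynomial σ R) ^ a i) ∈ Ideal.span (X '' (T : Set σ)) ^ m ↔
      m ≤ ∑ j ∈ T, a j := by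
  constructor
  · intro h
    let φ : MvPolynomial σ R →ₐ[R] Polynomial R :=
      aeval fun i => if i ∈ T then Polynomial.X else 1
    have hspan : Ideal.map φ (Ideal.span (X '' (T : Set σ))) ≤ Ideal.span {Polynomial.X} := by
      rw [Ideal.map_span, Ideal.span_le]
      rintro _ ⟨_, ⟨j, hj, rfl⟩, rfl⟩
      simp [φ, Finset.mem_coe.mp hj]
    have hφ : φ (∏ i, X i ^ a i) = Polynomial.X ^ ∑ j ∈ T, a j := by
      simp [φ, map_prod, Finset.prod_ite_mem, Finset.prod_pow_eq_pow_sum]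
    have hmem := Ideal.pow_right_mono hspan m
      (Ideal.map_pow φ _ m ▸ Ideal.mem_map_of_mem φ h)
    rw [hφ, Ideal.span_singleton_pow, Ideal.mem_span_singleton] at hmem
    by_contra! hlt
    simpa [Polynomial.coeff_X_pow] using Polynomial.X_pow_dvd_iff.mp hmem _ hlt
  · intro h
    have hT : (∏ j ∈ T, (X j : MvPolynomial σ R) ^ a j) ∈ Ideal.span (X '' (T : Set σ)) ^ m := by
      refine Ideal.pow_le_pow_right h ?_
      rw [← Finset.prod_pow_eq_pow_sum]
      exact Ideal.prod_mem_prod fun j hj =>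
        Ideal.pow_mem_pow (Ideal.subset_span (Set.mem_image_of_mem X hj)) _
    rw [← Finset.prod_mul_prod_compl T]
    exact Ideal.mul_mem_right _ _ hT

theorem Finset.sum_range_add_mod {M : Type*} [AddCommMonoid M] (f : ℕ → M) {n : ℕ} [NeZero n]
    (t : ℕ) : ∑ i ∈ range n, f ((i + t) % n) = ∑ i ∈ range n, f i := by
  rw [← Fin.sum_univ_eq_sum_range f, ← Fin.sum_univ_eq_sum_range fun i => f ((i + t) % n)]
  exact Fintype.sum_equiv (Equiv.addRight (t : Fin n)) _ _ fun i => by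
    simp [Fin.val_add, Nat.add_mod]

theorem Fin.sum_univ_add_two {M : Type*} [AddCommMonoid M] {n : ℕ} (a : Fin (n + 2) → M) :
    ∑ j, a j =
      a 0 + a ((n + 1 : ℕ) : Fin (n + 2)) + ∑ k ∈ range n, a ((k + 1 : ℕ) : Fin (n + 2)) := by
  have h := Fin.sum_univ_eq_sum_range (fun k => a (k : Fin (n + 2))) (n + 2)
  simp only [Fin.cast_val_eq_self] at h
  rw [h, Finset.sum_range_succ, Finset.sum_range_succ', Nat.cast_zero]
  abel

section Arcs

variable {n : ℕ}

theorem val_arcVertex (hn : 0 < n) (i t : ℕ) :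
    (((i + t) % n + 1 : ℕ) : Fin (n + 2)).val = (i + t) % n + 1 :=
  Fin.val_cast_of_lt (by have := Nat.mod_lt (i + t) hn; omega)

theorem zero_notMem_arcT (hn : 0 < n) (i : ℕ) : (0 : Fin (n + 2)) ∉ arcT n i := by
  simp only [arcT, Finset.mem_image, not_exists, not_and]
  intro t _ h
  have h' := congrArg Fin.val h
  rw [val_arcVertex hn] at h'
  simp at h'

theorem last_notMem_arcT (hn : 0 < n) (i : ℕ) : ((n + 1 : ℕ) : Fin (n + 2)) ∉ arcT n i := by
  simp only [arcT, Finset.mem_image, not_exists, not_and]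
  intro t _ h
  have := Nat.mod_lt (i + t) hn
  have h' := congrArg Fin.val h
  rw [val_arcVertex hn, Fin.val_cast_of_lt (by omega)] at h'
  omega

theorem sum_arcT (hn : 0 < n) {M : Type*} [AddCommMonoid M] (i : ℕ) (a : Fin (n + 2) → M) :
    ∑ j ∈ arcT n i, a j = ∑ t ∈ range (n - 2), a (((i + t) % n + 1 : ℕ) : Fin (n + 2)) := by
  refine Finset.sum_image fun t₁ h₁ t₂ h₂ h => ?_
  have h' := congrArg Fin.val h
  rw [val_arcVertex hn, val_arcVertex hn, Nat.add_right_cancel_iff] at h'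
  have ht₁ : t₁ < n := by simp at h₁; omega
  have ht₂ : t₂ < n := by simp at h₂; omega
  simpa [Nat.ModEq, Nat.mod_eq_of_lt, ht₁, ht₂] using Nat.ModEq.add_left_cancel' i h'

/-- Every cycle vertex lies on exactly `n - 2` of the `n` arcs. -/
theorem sum_sum_arcT (hn : 0 < n) (a : Fin (n + 2) → ℕ) :
    ∑ i ∈ range n, ∑ j ∈ arcT n i, a j =
      (n - 2) * ∑ k ∈ range n, a ((k + 1 : ℕ) : Fin (n + 2)) := by
  have : NeZero n := ⟨hn.ne'⟩
  simp_rw [sum_arcT hn]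
  rw [Finset.sum_comm]
  simp_rw [Finset.sum_range_add_mod (fun r => a ((r + 1 : ℕ) : Fin (n + 2)))]
  rw [Finset.sum_const, Finset.card_range, smul_eq_mul]

end Arcs

theorem monom_mem_apexIdeal_pow_iff (K : Type*) [Field K] {n : ℕ} {v : Fin (n + 2)}
    {S : Finset (Fin (n + 2))} (hv : v ∉ S) (a : Fin (n + 2) → ℕ) (m : ℕ) :
    monom K n a ∈ apexIdeal K n v S ^ m ↔ m ≤ a v + ∑ j ∈ S, a j := by
  rw [apexIdeal, ← Set.image_insert_eq, ← Finset.coe_insert, monom,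
    prod_X_pow_mem_span_X_image_pow_iff, Finset.sum_insert hv]

theorem monom_mem_symbPow_iff (K : Type*) [Field K] {n : ℕ} (hn : 0 < n) (m : ℕ)
    (a : Fin (n + 2) → ℕ) :
    monom K n a ∈ symbPow K n m ↔ ∀ i ∈ range n, m ≤ a 0 + ∑ j ∈ arcT n i, a j ∧
      m ≤ a ((n + 1 : ℕ) : Fin (n + 2)) + ∑ j ∈ arcT n i, a j := by
  simp only [symbPow, Submodule.mem_iInf, Submodule.mem_inf,
    monom_mem_apexIdeal_pow_iff K (zero_notMem_arcT hn _),
    monom_mem_apexIdeal_pow_iff K (last_notMem_arcT hn _)]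

theorem mul_le_of_forall_le_add_sum_arcT {n m : ℕ} (hn : 0 < n) (a : Fin (n + 2) → ℕ)
    (x : ℕ) (h : ∀ i ∈ range n, m ≤ x + ∑ j ∈ arcT n i, a j) :
    n * m ≤ n * x + (n - 2) * ∑ k ∈ range n, a ((k + 1 : ℕ) : Fin (n + 2)) :=
  calc n * m = ∑ _i ∈ range n, m := by simp
    _ ≤ ∑ i ∈ range n, (x + ∑ j ∈ arcT n i, a j) := Finset.sum_le_sum h
    _ = n * x + (n - 2) * ∑ k ∈ range n, a ((k + 1 : ℕ) : Fin (n + 2)) := by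
      rw [Finset.sum_add_distrib, sum_sum_arcT hn]
      simp

/-- Add the bounds of `mul_le_of_forall_le_add_sum_arcT` for both apexes; `n ≤ 2 (n - 2)`. -/
theorem mul_le_sum_of_monom_mem_symbPow (K : Type*) [Field K] {n m : ℕ} (hn : 4 ≤ n)
    {a : Fin (n + 2) → ℕ} (ha : monom K n a ∈ symbPow K n m) :
    n * m ≤ (n - 2) * ∑ j, a j := by
  rw [monom_mem_symbPow_iff K (by omega)] at ha
  have h₀ := mul_le_of_forall_le_add_sum_arcT (by omega) a _ fun i hi => (ha i hi).1
  have h₁ := mul_le_of_forall_le_add_sum_arcT (by omega) a _ fun i hi => (ha i hi).2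
  rw [Fin.sum_univ_add_two]
  obtain ⟨k, rfl⟩ : ∃ k, n = k + 4 := ⟨n - 4, by omega⟩
  simp only [show k + 4 - 2 = k + 2 by omega] at h₀ h₁ ⊢
  nlinarith

def cycleWeight (n c : ℕ) : Fin (n + 2) → ℕ :=
  fun j => if j = 0 ∨ j = ((n + 1 : ℕ) : Fin (n + 2)) then 0 else c

theorem sum_arcT_cycleWeight {n : ℕ} (hn : 0 < n) (c i : ℕ) :
    ∑ j ∈ arcT n i, cycleWeight n c j = (n - 2) * c := by
  rw [sum_arcT hn]
  refine (Finset.sum_congr rfl fun t ht => if_neg ?_).trans (by simp)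
  have hmem := Finset.mem_image_of_mem (fun t => (((i + t) % n + 1 : ℕ) : Fin (n + 2))) ht
  rintro (h | h) <;> rw [h] at hmem
  exacts [zero_notMem_arcT hn i hmem, last_notMem_arcT hn i hmem]

theorem sum_cycleWeight {n : ℕ} (c : ℕ) : ∑ j, cycleWeight n c j = n * c := by
  have hcycle : ∀ k ∈ range n, cycleWeight n c ((k + 1 : ℕ) : Fin (n + 2)) = c := by
    intro k hk
    rw [Finset.mem_range] at hk
    refine if_neg ?_
    simp only [Fin.ext_iff, Fin.val_cast_of_lt (show k + 1 < n + 2 by omega),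
      Fin.val_cast_of_lt (show n + 1 < n + 2 by omega), Fin.val_zero]
    omega
  rw [Fin.sum_univ_add_two, Finset.sum_congr rfl hcycle]
  simp [cycleWeight]

theorem monom_cycleWeight_mem_symbPow (K : Type*) [Field K] {n : ℕ} (hn : 2 < n) (m : ℕ) :
    monom K n (cycleWeight n (m / (n - 2) + 1)) ∈ symbPow K n m := by
  rw [monom_mem_symbPow_iff K (by omega)]
  intro i _
  rw [sum_arcT_cycleWeight (by omega)]
  simp only [cycleWeight, true_or, or_true, if_true, zero_add, and_self]
  have := Nat.lt_mul_div_succ m (show 0 < n - 2 by omega)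
  omega

theorem alphaSymb_le (K : Type*) [Field K] {n : ℕ} (hn : 2 < n) (m : ℕ) :
    alphaSymb K n m ≤ n * (m / (n - 2) + 1) :=
  Nat.sInf_le ⟨_, sum_cycleWeight _, monom_cycleWeight_mem_symbPow K hn m⟩

theorem mul_le_alphaSymb (K : Type*) [Field K] {n : ℕ} (hn : 4 ≤ n) (m : ℕ) :
    n * m ≤ (n - 2) * alphaSymb K n m := by
  obtain ⟨a, ha, hmem⟩ : alphaSymb K n m ∈ _ :=
    Nat.sInf_mem ⟨_, _, sum_cycleWeight _, monom_cycleWeight_mem_symbPow K (by omega) m⟩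
  rw [← ha]
  exact mul_le_sum_of_monom_mem_symbPow K hn hmem

theorem tendsto_div_of_mul_le_of_le_mul_add {f : ℕ → ℝ} {c d : ℝ} (hlo : ∀ m, c * m ≤ f m)
    (hhi : ∀ m, f m ≤ c * m + d) : Tendsto (fun m => f m / m) atTop (𝓝 c) := by
  have hd : Tendsto (fun m : ℕ => c + d / m) atTop (𝓝 c) := by
    simpa using tendsto_const_nhds.add (tendsto_const_div_atTop_nhds_zero_nat d)
  refine tendsto_of_tendsto_of_tendsto_of_le_of_le' tendsto_const_nhds hd ?_ ?_ <;>
    filter_upwards [eventually_gt_atTop 0] with m hm <;>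
    have hm' : (0 : ℝ) < m := by exact_mod_cast hm
  · rw [le_div_iff₀ hm']
    exact hlo m
  · rw [div_le_iff₀ hm', add_mul, div_mul_cancel₀ _ hm'.ne']
    exact hhi m

/-- The Waldschmidt constant of `I_{B_n}`:
`γ(I_{B_n}) = lim_{m→∞} α_{n,m}/m = n/(n-2)` for every `n ≥ 4`. -/
theorem waldschmidt_constant_bipyramid (K : Type*) [Field K] (n : ℕ) (hn : 4 ≤ n) :
    Filter.Tendsto (fun m : ℕ => (alphaSymb K n m : ℝ) / (m : ℝ)) Filter.atTop
      (nhds ((n : ℝ) / ((n : ℝ) - 2))) := by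
  have hcast : ((n - 2 : ℕ) : ℝ) = n - 2 := by rw [Nat.cast_sub (by omega), Nat.cast_ofNat]
  have hpos : (0 : ℝ) < n - 2 := by
    have : (4 : ℝ) ≤ n := by exact_mod_cast hn
    linarith
  refine tendsto_div_of_mul_le_of_le_mul_add (d := n) (fun m => ?_) (fun m => ?_)
  · have h : (n : ℝ) * m ≤ (n - 2) * alphaSymb K n m := by
      rw [← hcast]
      exact_mod_cast mul_le_alphaSymb K hn m
    rw [div_mul_eq_mul_div, div_le_iff₀ hpos]
    linarith
  · have hdiv : ((m / (n - 2) : ℕ) : ℝ) ≤ m / (n - 2) := hcast ▸ Nat.cast_div_le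
    calc (alphaSymb K n m : ℝ) ≤ n * ((m / (n - 2) : ℕ) + 1) := by
          exact_mod_cast alphaSymb_le K (by omega) m
      _ ≤ n * (m / (n - 2) + 1) := by gcongr
      _ = n / (n - 2) * m + n := by ring
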